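/- arXiv:1703.03299 — 6 statements merged into one kernel-verified Lean document; each statement's English description precedes it below -/
import Mathlib

section
/- Let N be a positive integer, 0 < s < 1 and p > 1 with ps < N, and set p*_s = pN/(N−ps). There exists a positive constant S = S(N,s,p) such that for every v ∈ C_c^∞(ℝ^N), ∬_{ℝ^N×ℝ^N} |v(x)−v(y)|^p / |x−y|^{N+ps} dx dy ≥ S · ( ∫_{ℝ^N} |v(x)|^{p*_s} dx )^{p/p*_s}. -/
open MeasureTheory Real Set Filter Metric
open scoped ENNReal Topology NNReal

noncomputable section

abbrev Euc (N : ℕ) := EuclideanSpace ℝ (Fin N)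

/-- The Gagliardo energy `∬ |u(x)-u(y)|^p / |x-y|^{N+ps} dx dy` (valued in `ℝ≥0∞`). -/
def gagliardoEnergy (N : ℕ) (p s : ℝ) (u : Euc N → ℝ) : ℝ≥0∞ :=
  ∫⁻ x, ∫⁻ y, ENNReal.ofReal (|u x - u y| ^ p / ‖x - y‖ ^ ((N : ℝ) + p * s))

/-- Optimization-in-`r` lemma: pure real analysis. -/
lemma core_real {Nr s p q C1 C2 a D J : ℝ}
    (hNr : 0 < Nr) (hs : 0 < s) (hp : 0 < p) (hps : p * s < Nr)
    (hq : q = p * Nr / (Nr - p * s))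
    (hC1 : 0 < C1) (hC2 : 0 < C2) (ha : 0 ≤ a) (hD : 0 ≤ D) (hJ : 0 < J)
    (h : ∀ r : ℝ, 0 < r → a ≤ C1 * r ^ s * D ^ (1/p) + C2 * r ^ (-(Nr/q)) * J ^ (1/q)) :
    a ^ q ≤ (C1 + C2) ^ q * D * J ^ (p * s / Nr) := by
  have hNps : 0 < Nr - p * s := by linarith
  have hq0 : 0 < q := by rw [hq]; positivity
  rcases hD.eq_or_lt with hD0 | hD0
  · -- D = 0 : let r → ∞
    have ha0 : a = 0 := by
      have hle : a ≤ 0 := by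
        apply le_of_forall_pos_le_add
        intro ε hε
        set K : ℝ := C2 * J ^ (1/q) with hK
        have hK0 : 0 < K := by positivity
        set r : ℝ := (K / ε) ^ (q / Nr) with hr
        have hrpos : 0 < r := by positivity
        have h1 := h r hrpos
        have hDz : D ^ (1/p) = 0 := by
          rw [← hD0, Real.zero_rpow (by positivity)]
        have hr2 : r ^ (-(Nr/q)) = ε / K := by
          rw [hr, ← Real.rpow_mul (by positivity)]
          rw [show q / Nr * -(Nr/q) = -1 by field_simp]
          rw [Real.rpow_neg_one, inv_div]
        rw [hDz, mul_zero, hr2] at h1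
        calc a ≤ 0 + C2 * (ε / K) * J ^ (1/q) := h1
          _ = 0 + ε := by rw [hK]; field_simp
      exact le_antisymm hle ha
    rw [ha0, Real.zero_rpow hq0.ne', ← hD0, mul_zero, zero_mul]
  · -- D > 0 : optimize in r
    have hNe : Nr ≠ 0 := hNr.ne'
    have hNpse : Nr - p * s ≠ 0 := hNps.ne'
    set es : ℝ := s * (Nr - p*s) / Nr^2 with hes
    have hX : (0:ℝ) < J ^ (1/q) / D ^ (1/p) := by positivity
    set X : ℝ := J ^ (1/q) / D ^ (1/p) with hXdef
    set r : ℝ := X ^ (p/Nr) with hrdef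
    have hrpos : 0 < r := by positivity
    have hlogX : Real.log X = (1/q) * Real.log J - (1/p) * Real.log D := by
      rw [hXdef, Real.log_div (ne_of_gt (by positivity)) (ne_of_gt (by positivity)),
        Real.log_rpow hJ, Real.log_rpow hD0]
    have hlogr : Real.log r = (p/Nr) * Real.log X := Real.log_rpow hX _
    have e1 : r ^ s * D ^ (1/p) = D ^ (1/q) * J ^ es := by
      rw [Real.rpow_def_of_pos hrpos, Real.rpow_def_of_pos hD0, Real.rpow_def_of_pos hD0,
        Real.rpow_def_of_pos hJ, ← Real.exp_add, ← Real.exp_add]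
      congr 1
      rw [hlogr, hlogX, hes, hq]
      field_simp
      ring
    have e2 : r ^ (-(Nr/q)) * J ^ (1/q) = D ^ (1/q) * J ^ es := by
      rw [Real.rpow_def_of_pos hrpos, Real.rpow_def_of_pos hD0, Real.rpow_def_of_pos hJ,
        Real.rpow_def_of_pos hJ, ← Real.exp_add, ← Real.exp_add]
      congr 1
      rw [hlogr, hlogX, hes, hq]
      field_simp
      ring
    have h1 := h r hrpos
    have h2 : a ≤ (C1 + C2) * (D ^ (1/q) * J ^ es) := by
      calc a ≤ C1 * r ^ s * D ^ (1/p) + C2 * r ^ (-(Nr/q)) * J ^ (1/q) := h1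
        _ = C1 * (r ^ s * D ^ (1/p)) + C2 * (r ^ (-(Nr/q)) * J ^ (1/q)) := by ring
        _ = (C1 + C2) * (D ^ (1/q) * J ^ es) := by rw [e1, e2]; ring
    have h3 : a ^ q ≤ ((C1 + C2) * (D ^ (1/q) * J ^ es)) ^ q :=
      Real.rpow_le_rpow ha h2 hq0.le
    have hiq : (1/q) * q = 1 := by field_simp
    have hesq : es * q = p * s / Nr := by
      have hsp : Nr - s * p ≠ 0 := by rw [mul_comm s p]; exact hNpse
      rw [hes, hq]; field_simp
    calc a ^ q ≤ ((C1 + C2) * (D ^ (1/q) * J ^ es)) ^ q := h3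
      _ = (C1 + C2) ^ q * D * J ^ (p * s / Nr) := by
        rw [Real.mul_rpow (by positivity) (by positivity),
          Real.mul_rpow (by positivity) (by positivity),
          ← Real.rpow_mul hD0.le, ← Real.rpow_mul hJ.le, hiq, hesq, Real.rpow_one]
        ring

/-- Hölder with the constant function 1. -/
lemma lintegral_le_rpow_mul_rpow {α : Type*} [MeasurableSpace α] (μ : Measure α)
    {p p' : ℝ} (hpc : p.HolderConjugate p') (f : α → ℝ≥0∞) (hf : AEMeasurable f μ) :
    ∫⁻ a, f a ∂μ ≤ (∫⁻ a, f a ^ p ∂μ) ^ (1/p) * (μ Set.univ) ^ (1/p') := by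
  have h := ENNReal.lintegral_mul_le_Lp_mul_Lq μ hpc hf
    (aemeasurable_const (b := (1 : ℝ≥0∞)))
  simpa [lintegral_const] using h


lemma ball_estimate {N : ℕ} (hN : 0 < N) {s p q : ℝ}
    (hs0 : 0 < s) (hp1 : 1 < p) (hps : p * s < N)
    (hq1 : 1 < q) (hNq : (N : ℝ) / q = ((N : ℝ) - p * s) / p)
    (v : Euc N → ℝ) (hv : Continuous v) (x : Euc N) {r : ℝ} (hr : 0 < r) :
    ENNReal.ofReal |v x| ≤
      (volume (ball (0 : Euc N) 1)) ^ (-(1/p)) * ENNReal.ofReal r ^ s *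
        (∫⁻ y, ENNReal.ofReal (|v x - v y| ^ p / ‖x - y‖ ^ ((N : ℝ) + p * s))) ^ (1/p)
      + (volume (ball (0 : Euc N) 1)) ^ (-(1/q)) * ENNReal.ofReal r ^ (-((N : ℝ)/q)) *
        (∫⁻ y, ENNReal.ofReal (|v y| ^ q)) ^ (1/q) := by
  haveI : Nonempty (Fin N) := Fin.pos_iff_nonempty.mp hN
  haveI : Nontrivial (Euc N) := by
    apply Module.nontrivial_of_finrank_pos (R := ℝ) (M := Euc N)
    rw [finrank_euclideanSpace_fin]
    exact hN
  have hNr : (0 : ℝ) < N := Nat.cast_pos.mpr hN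
  have hp0 : (0 : ℝ) < p := lt_trans one_pos hp1
  have hq0 : (0 : ℝ) < q := lt_trans one_pos hq1
  have he0 : (0 : ℝ) < (N : ℝ) + p * s := by positivity
  set e : ℝ := (N : ℝ) + p * s with he
  set ω : ℝ≥0∞ := volume (ball (0 : Euc N) 1) with hω
  have hω0 : ω ≠ 0 := (measure_ball_pos volume _ one_pos).ne'
  have hωt : ω ≠ ⊤ := measure_ball_lt_top.ne
  set B := ball x r with hB
  set R : ℝ≥0∞ := ENNReal.ofReal r with hR
  have hR0 : R ≠ 0 := (ENNReal.ofReal_pos.mpr hr).ne'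
  have hRt : R ≠ ⊤ := ENNReal.ofReal_ne_top
  have hμB : volume B = R ^ (N : ℝ) * ω := by
    rw [show volume B = ENNReal.ofReal (r ^ Module.finrank ℝ (Euc N)) * volume (ball (0 : Euc N) 1) from
      Measure.addHaar_ball volume x hr.le, finrank_euclideanSpace_fin,
      ENNReal.ofReal_pow hr.le, ← ENNReal.rpow_natCast]
  have hμB0 : volume B ≠ 0 := (measure_ball_pos volume x hr).ne'
  have hμBt : volume B ≠ ⊤ := measure_ball_lt_top.ne
  have hmv : Measurable v := hv.measurable
  set G : ℝ≥0∞ := ∫⁻ y, ENNReal.ofReal (|v x - v y| ^ p / ‖x - y‖ ^ e) with hG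
  set J : ℝ≥0∞ := ∫⁻ y, ENNReal.ofReal (|v y| ^ q) with hJ
  -- step 1 : split
  have step1 : ENNReal.ofReal |v x| * volume B ≤
      (∫⁻ y in B, ENNReal.ofReal (|v x - v y|)) + (∫⁻ y in B, ENNReal.ofReal (|v y|)) := by
    have hmf : Measurable fun y => ENNReal.ofReal (|v x - v y|) :=
      ((measurable_const.sub hmv).abs).ennreal_ofReal
    rw [← setLIntegral_const B (ENNReal.ofReal |v x|), ← lintegral_add_left hmf]
    apply lintegral_mono
    intro y
    refine le_trans (ENNReal.ofReal_le_ofReal ?_) (ENNReal.ofReal_add_le)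
    have := abs_sub_abs_le_abs_sub (v x) (v y)
    linarith [this]
  -- Hölder for the first term
  have holder1 : (∫⁻ y in B, ENNReal.ofReal (|v x - v y|)) ≤
      (∫⁻ y in B, ENNReal.ofReal (|v x - v y| ^ p)) ^ (1/p) * (volume B) ^ (1 - 1/p) := by
    have hmf : Measurable fun y => ENNReal.ofReal (|v x - v y|) :=
      ((measurable_const.sub hmv).abs).ennreal_ofReal
    have hpc : p.HolderConjugate (p / (p - 1)) := Real.HolderConjugate.conjExponent hp1
    have hconj : 1 / (p / (p - 1)) = 1 - 1/p := by
      rw [one_div_div]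
      field_simp
    calc (∫⁻ y in B, ENNReal.ofReal (|v x - v y|))
        ≤ (∫⁻ y in B, (ENNReal.ofReal (|v x - v y|)) ^ p) ^ (1/p) *
            ((volume.restrict B) Set.univ) ^ (1/(p/(p-1))) :=
          lintegral_le_rpow_mul_rpow _ hpc _ hmf.aemeasurable
      _ = (∫⁻ y in B, ENNReal.ofReal (|v x - v y| ^ p)) ^ (1/p) * (volume B) ^ (1 - 1/p) := by
          rw [Measure.restrict_apply_univ, hconj]
          congr 1
          refine congrArg (· ^ (1/p)) (lintegral_congr fun y => ?_)
          exact ENNReal.ofReal_rpow_of_nonneg (abs_nonneg _) hp0.le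
  -- estimate of the local energy
  have step3 : (∫⁻ y in B, ENNReal.ofReal (|v x - v y| ^ p)) ≤ R ^ e * G := by
    have hxne : ∀ᵐ (y : Euc N) ∂volume, y ≠ x := by
      have h0 : volume ({x} : Set (Euc N)) = 0 := measure_singleton x
      filter_upwards [compl_mem_ae_iff.mpr h0] with y hy
      simpa using hy
    calc (∫⁻ y in B, ENNReal.ofReal (|v x - v y| ^ p))
        ≤ ∫⁻ y in B, R ^ e * ENNReal.ofReal (|v x - v y| ^ p / ‖x - y‖ ^ e) := by
          apply lintegral_mono_ae
          filter_upwards [ae_restrict_mem measurableSet_ball, ae_restrict_of_ae hxne]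
            with y hyB hyx
          have hnorm0 : 0 < ‖x - y‖ := by
            rw [norm_pos_iff, sub_ne_zero]
            exact Ne.symm hyx
          have hnormr : ‖x - y‖ < r := by
            rw [norm_sub_rev]
            exact mem_ball_iff_norm.mp hyB
          have hle : ‖x - y‖ ^ e ≤ r ^ e := Real.rpow_le_rpow (norm_nonneg _) hnormr.le he0.le
          have hpow0 : 0 < ‖x - y‖ ^ e := Real.rpow_pos_of_pos hnorm0 e
          rw [hR, ENNReal.ofReal_rpow_of_pos hr, ← ENNReal.ofReal_mul (by positivity)]
          apply ENNReal.ofReal_le_ofReal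
          calc |v x - v y| ^ p
              = |v x - v y| ^ p / ‖x - y‖ ^ e * ‖x - y‖ ^ e :=
                (div_mul_cancel₀ _ hpow0.ne').symm
            _ ≤ |v x - v y| ^ p / ‖x - y‖ ^ e * r ^ e := by
                apply mul_le_mul_of_nonneg_left hle (by positivity)
            _ = r ^ e * (|v x - v y| ^ p / ‖x - y‖ ^ e) := by ring
      _ = R ^ e * ∫⁻ y in B, ENNReal.ofReal (|v x - v y| ^ p / ‖x - y‖ ^ e) :=
          lintegral_const_mul' _ _ (ENNReal.rpow_ne_top_of_nonneg he0.le hRt)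
      _ ≤ R ^ e * G := by
          gcongr
          exact setLIntegral_le_lintegral _ _
  -- Hölder for the second term
  have holder2 : (∫⁻ y in B, ENNReal.ofReal (|v y|)) ≤ J ^ (1/q) * (volume B) ^ (1 - 1/q) := by
    have hmg : Measurable fun y => ENNReal.ofReal (|v y|) := (hmv.abs).ennreal_ofReal
    have hqc : q.HolderConjugate (q / (q - 1)) := Real.HolderConjugate.conjExponent hq1
    have hconj : 1 / (q / (q - 1)) = 1 - 1/q := by
      rw [one_div_div]
      field_simp
    calc (∫⁻ y in B, ENNReal.ofReal (|v y|))
        ≤ (∫⁻ y in B, (ENNReal.ofReal (|v y|)) ^ q) ^ (1/q) *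
            ((volume.restrict B) Set.univ) ^ (1/(q/(q-1))) :=
          lintegral_le_rpow_mul_rpow _ hqc _ hmg.aemeasurable
      _ = (∫⁻ y in B, ENNReal.ofReal (|v y| ^ q)) ^ (1/q) * (volume B) ^ (1 - 1/q) := by
          rw [Measure.restrict_apply_univ, hconj]
          congr 1
          refine congrArg (· ^ (1/q)) (lintegral_congr fun y => ?_)
          exact ENNReal.ofReal_rpow_of_nonneg (abs_nonneg _) hq0.le
      _ ≤ J ^ (1/q) * (volume B) ^ (1 - 1/q) := by
          gcongr
          exact setLIntegral_le_lintegral _ _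
  -- combine
  have main : ENNReal.ofReal |v x| * volume B ≤
      (R ^ e * G) ^ (1/p) * (volume B) ^ (1 - 1/p) + J ^ (1/q) * (volume B) ^ (1 - 1/q) := by
    refine step1.trans (add_le_add (holder1.trans ?_) holder2)
    gcongr
  rw [← ENNReal.mul_le_mul_iff_left hμB0 hμBt]
  refine main.trans (le_of_eq ?_)
  rw [add_mul]
  have hRadd : ∀ a b : ℝ, R ^ (a + b) = R ^ a * R ^ b := fun a b => ENNReal.rpow_add a b hR0 hRt
  have hωadd : ∀ a b : ℝ, ω ^ (a + b) = ω ^ a * ω ^ b := fun a b => ENNReal.rpow_add a b hω0 hωt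
  have hp1p : (0:ℝ) ≤ 1 - 1/p := by
    rw [sub_nonneg]
    rw [div_le_one hp0]
    exact hp1.le
  have hq1q : (0:ℝ) ≤ 1 - 1/q := by
    rw [sub_nonneg]
    rw [div_le_one hq0]
    exact hq1.le
  congr 1
  · -- first term equality
    symm
    rw [hμB, ENNReal.mul_rpow_of_nonneg _ _ (by positivity : (0:ℝ) ≤ 1/p),
      ENNReal.mul_rpow_of_nonneg _ _ hp1p, ← ENNReal.rpow_mul R e (1/p),
      ← ENNReal.rpow_mul R (N:ℝ) (1 - 1/p)]
    have h1 : R ^ s * R ^ (N:ℝ) = R ^ (e * (1/p)) * R ^ ((N:ℝ) * (1 - 1/p)) := by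
      rw [← hRadd, ← hRadd]
      congr 1
      rw [he]
      field_simp
      ring
    have h2 : ω ^ (-(1/p)) * ω ^ (1:ℝ) = ω ^ (1 - 1/p) := by
      rw [← hωadd]
      congr 1
      ring
    calc ω ^ (-(1/p)) * R ^ s * G ^ (1/p) * (R ^ (N:ℝ) * ω)
        = (R ^ s * R ^ (N:ℝ)) * (ω ^ (-(1/p)) * ω ^ (1:ℝ)) * G ^ (1/p) := by
          rw [ENNReal.rpow_one]
          ring
      _ = (R ^ (e * (1/p)) * R ^ ((N:ℝ) * (1 - 1/p))) * ω ^ (1 - 1/p) * G ^ (1/p) := by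
          rw [h1, h2]
      _ = R ^ (e * (1/p)) * G ^ (1/p) * (R ^ ((N:ℝ) * (1 - 1/p)) * ω ^ (1 - 1/p)) := by
          ring
  · -- second term equality
    symm
    rw [hμB, ENNReal.mul_rpow_of_nonneg _ _ hq1q, ← ENNReal.rpow_mul R (N:ℝ) (1 - 1/q)]
    have h1 : R ^ (-((N:ℝ)/q)) * R ^ (N:ℝ) = R ^ ((N:ℝ) * (1 - 1/q)) := by
      rw [← hRadd]
      congr 1
      field_simp
      ring
    have h2 : ω ^ (-(1/q)) * ω ^ (1:ℝ) = ω ^ (1 - 1/q) := by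
      rw [← hωadd]
      congr 1
      ring
    calc ω ^ (-(1/q)) * R ^ (-((N:ℝ)/q)) * J ^ (1/q) * (R ^ (N:ℝ) * ω)
        = (R ^ (-((N:ℝ)/q)) * R ^ (N:ℝ)) * (ω ^ (-(1/q)) * ω ^ (1:ℝ)) * J ^ (1/q) := by
          rw [ENNReal.rpow_one]
          ring
      _ = R ^ ((N:ℝ) * (1 - 1/q)) * ω ^ (1 - 1/q) * J ^ (1/q) := by
          rw [h1, h2]
      _ = J ^ (1/q) * (R ^ ((N:ℝ) * (1 - 1/q)) * ω ^ (1 - 1/q)) := by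
          ring

/-- **Fractional Sobolev inequality.** For `0 < s < 1`, `p > 1` with `ps < N`, there is `S > 0`
such that for all `v ∈ C_c^∞(ℝ^N)`,
`∬ |v(x)-v(y)|^p/|x-y|^{N+ps} ≥ S (∫ |v|^{p*_s})^{p/p*_s}` where `p*_s = pN/(N-ps)`. -/
theorem fractional_sobolev (N : ℕ) (hN : 0 < N) (s p : ℝ)
    (hs0 : 0 < s) (hs1 : s < 1) (hp1 : 1 < p) (hps : p * s < N) :
    ∃ S : ℝ, 0 < S ∧ ∀ v : Euc N → ℝ, ContDiff ℝ (⊤ : ℕ∞) v → HasCompactSupport v →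
      ENNReal.ofReal (S * (∫ x, |v x| ^ (p * N / ((N : ℝ) - p * s))) ^
          (p / (p * N / ((N : ℝ) - p * s)))) ≤
        gagliardoEnergy N p s v := by
  have hNr : (0 : ℝ) < N := Nat.cast_pos.mpr hN
  have hp0 : (0 : ℝ) < p := lt_trans one_pos hp1
  have hNps : (0 : ℝ) < (N : ℝ) - p * s := by linarith
  set q : ℝ := p * (N : ℝ) / ((N : ℝ) - p * s) with hqdef
  have hq0 : 0 < q := by rw [hqdef]; positivity
  have hq1 : 1 < q := by
    rw [hqdef, lt_div_iff₀ hNps]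
    nlinarith
  have hNq : (N : ℝ) / q = ((N : ℝ) - p * s) / p := by
    rw [hqdef]
    field_simp
  haveI : Nonempty (Fin N) := Fin.pos_iff_nonempty.mp hN
  haveI : Nontrivial (Euc N) := by
    apply Module.nontrivial_of_finrank_pos (R := ℝ) (M := Euc N)
    rw [finrank_euclideanSpace_fin]
    exact hN
  set ω : ℝ≥0∞ := volume (ball (0 : Euc N) 1) with hω
  have hω0 : ω ≠ 0 := (measure_ball_pos volume _ one_pos).ne'
  have hωt : ω ≠ ⊤ := measure_ball_lt_top.ne
  have hωR : 0 < ω.toReal := ENNReal.toReal_pos hω0 hωt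
  set C1 : ℝ := ω.toReal ^ (-(1/p)) with hC1def
  set C2 : ℝ := ω.toReal ^ (-(1/q)) with hC2def
  have hC1 : 0 < C1 := Real.rpow_pos_of_pos hωR _
  have hC2 : 0 < C2 := Real.rpow_pos_of_pos hωR _
  set Cc : ℝ := (C1 + C2) ^ q with hCcdef
  have hCc : 0 < Cc := Real.rpow_pos_of_pos (by linarith) _
  have hωne : ∀ y : ℝ, ω ^ y ≠ ⊤ := fun y => by
    simp [ENNReal.rpow_eq_top_iff, hω0, hωt]
  have hC1e : ENNReal.ofReal C1 = ω ^ (-(1/p)) := by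
    rw [hC1def, ENNReal.toReal_rpow, ENNReal.ofReal_toReal (hωne _)]
  have hC2e : ENNReal.ofReal C2 = ω ^ (-(1/q)) := by
    rw [hC2def, ENNReal.toReal_rpow, ENNReal.ofReal_toReal (hωne _)]
  refine ⟨Cc⁻¹, inv_pos.mpr hCc, fun v hv hvc => ?_⟩
  have hcont : Continuous v := hv.continuous
  set J : ℝ≥0∞ := ∫⁻ x, ENNReal.ofReal (|v x| ^ q) with hJdef
  have habs : Continuous fun x => |v x| ^ q :=
    (hcont.abs).rpow_const (fun x => Or.inr hq0.le)
  have hcs : HasCompactSupport fun x => |v x| ^ q := by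
    have : (fun x => |v x| ^ q) = (fun t : ℝ => |t| ^ q) ∘ v := rfl
    rw [this]
    exact hvc.comp_left (by rw [abs_zero, Real.zero_rpow hq0.ne'])
  have hint : Integrable (fun x => |v x| ^ q) := habs.integrable_of_hasCompactSupport hcs
  have hJofReal : ENNReal.ofReal (∫ x, |v x| ^ q) = J :=
    MeasureTheory.ofReal_integral_eq_lintegral_ofReal hint
      (Filter.Eventually.of_forall fun x => by positivity)
  have hInt_nonneg : (0:ℝ) ≤ ∫ x, |v x| ^ q := integral_nonneg fun x => by positivity
  have hJtop : J ≠ ⊤ := by rw [← hJofReal]; exact ENNReal.ofReal_ne_top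
  have hIq : ∫ x, |v x| ^ q = J.toReal := by
    rw [← hJofReal, ENNReal.toReal_ofReal hInt_nonneg]
  set E := gagliardoEnergy N p s v with hE
  by_cases hJ0 : J = 0
  · have hz : ∫ x, |v x| ^ q = 0 := by rw [hIq, hJ0, ENNReal.toReal_zero]
    rw [hz, Real.zero_rpow (div_pos hp0 hq0).ne', mul_zero, ENNReal.ofReal_zero]
    exact zero_le
  have hJr : 0 < J.toReal := ENNReal.toReal_pos hJ0 hJtop
  -- the pointwise estimate
  have hpoint : ∀ x, ENNReal.ofReal (|v x| ^ q) ≤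
      ENNReal.ofReal Cc * J ^ (p * s / (N : ℝ)) *
        ∫⁻ y, ENNReal.ofReal (|v x - v y| ^ p / ‖x - y‖ ^ ((N : ℝ) + p * s)) := by
    intro x
    set G : ℝ≥0∞ := ∫⁻ y, ENNReal.ofReal (|v x - v y| ^ p / ‖x - y‖ ^ ((N : ℝ) + p * s))
      with hGdef
    by_cases hGtop : G = ⊤
    · rw [hGtop, ENNReal.mul_top]
      · exact le_top
      · refine mul_ne_zero ?_ ?_
        · simpa [ENNReal.ofReal_eq_zero, not_le] using hCc
        · simp [ENNReal.rpow_eq_zero_iff, hJ0, hJtop]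
    · set D : ℝ := G.toReal with hDdef
      have key : ∀ r : ℝ, 0 < r →
          |v x| ≤ C1 * r ^ s * D ^ (1/p) + C2 * r ^ (-((N:ℝ)/q)) * J.toReal ^ (1/q) := by
        intro r hr
        have hcore := ball_estimate hN hs0 hp1 hps hq1 hNq v hcont x hr
        have hRne : ∀ y : ℝ, (ENNReal.ofReal r) ^ y ≠ ⊤ := fun y => by
          simp [ENNReal.rpow_eq_top_iff, (ENNReal.ofReal_pos.mpr hr).ne',
            ENNReal.ofReal_ne_top]
        have hfin : ω ^ (-(1/p)) * (ENNReal.ofReal r) ^ s * G ^ (1/p)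
            + ω ^ (-(1/q)) * (ENNReal.ofReal r) ^ (-((N:ℝ)/q)) * J ^ (1/q) ≠ ⊤ := by
          apply ENNReal.add_ne_top.mpr
          constructor
          · exact ENNReal.mul_ne_top (ENNReal.mul_ne_top (hωne _) (hRne _))
              (ENNReal.rpow_ne_top_of_nonneg (by positivity) hGtop)
          · exact ENNReal.mul_ne_top (ENNReal.mul_ne_top (hωne _) (hRne _))
              (ENNReal.rpow_ne_top_of_nonneg (by positivity) hJtop)
        have := ENNReal.toReal_mono hfin hcore
        rw [ENNReal.toReal_ofReal (abs_nonneg _)] at this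
        refine this.trans (le_of_eq ?_)
        rw [ENNReal.toReal_add (by
            exact ENNReal.mul_ne_top (ENNReal.mul_ne_top (hωne _) (hRne _))
              (ENNReal.rpow_ne_top_of_nonneg (by positivity) hGtop))
          (by
            exact ENNReal.mul_ne_top (ENNReal.mul_ne_top (hωne _) (hRne _))
              (ENNReal.rpow_ne_top_of_nonneg (by positivity) hJtop)),
          ENNReal.toReal_mul, ENNReal.toReal_mul, ENNReal.toReal_mul, ENNReal.toReal_mul,
          ← ENNReal.toReal_rpow, ← ENNReal.toReal_rpow, ← ENNReal.toReal_rpow,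
          ← ENNReal.toReal_rpow, ← ENNReal.toReal_rpow, ← ENNReal.toReal_rpow,
          ENNReal.toReal_ofReal hr.le]
      have hreal := core_real hNr hs0 hp0 hps hqdef hC1 hC2 (abs_nonneg (v x))
        ENNReal.toReal_nonneg hJr key
      calc ENNReal.ofReal (|v x| ^ q)
          ≤ ENNReal.ofReal ((C1 + C2) ^ q * D * J.toReal ^ (p * s / (N:ℝ))) :=
            ENNReal.ofReal_le_ofReal hreal
        _ = ENNReal.ofReal Cc * J ^ (p * s / (N : ℝ)) * G := by
            rw [ENNReal.ofReal_mul (by positivity), ENNReal.ofReal_mul (by positivity)]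
            rw [ENNReal.toReal_rpow, ENNReal.ofReal_toReal
              (ENNReal.rpow_ne_top_of_nonneg (by positivity) hJtop),
              hDdef, ENNReal.ofReal_toReal hGtop, hCcdef]
            ring
  -- integrate the pointwise estimate
  have hconst_ne : ENNReal.ofReal Cc * J ^ (p * s / (N : ℝ)) ≠ ⊤ :=
    ENNReal.mul_ne_top ENNReal.ofReal_ne_top
      (ENNReal.rpow_ne_top_of_nonneg (by positivity) hJtop)
  have hsum : J ≤ ENNReal.ofReal Cc * J ^ (p * s / (N : ℝ)) * E := by
    calc J ≤ ∫⁻ x, ENNReal.ofReal Cc * J ^ (p * s / (N : ℝ)) *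
          ∫⁻ y, ENNReal.ofReal (|v x - v y| ^ p / ‖x - y‖ ^ ((N : ℝ) + p * s)) :=
        lintegral_mono hpoint
      _ = ENNReal.ofReal Cc * J ^ (p * s / (N : ℝ)) * E :=
        lintegral_const_mul' _ _ hconst_ne
  by_cases hEtop : E = ⊤
  · rw [hEtop]
    exact le_top
  have hJsplit : J = J ^ (p * s / (N:ℝ)) * J ^ (p / q) := by
    rw [← ENNReal.rpow_add _ _ hJ0 hJtop,
      show p * s / (N:ℝ) + p / q = 1 by rw [hqdef]; field_simp; ring, ENNReal.rpow_one]
  have hdiv : J ^ (p / q) ≤ ENNReal.ofReal Cc * E := by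
    have h2 := hsum
    nth_rewrite 1 [hJsplit] at h2
    have ha0 : J ^ (p * s / (N:ℝ)) ≠ 0 := by
      simp [ENNReal.rpow_eq_zero_iff, hJ0, hJtop]
    have hat : J ^ (p * s / (N:ℝ)) ≠ ⊤ :=
      ENNReal.rpow_ne_top_of_nonneg (by positivity) hJtop
    have h3 : J ^ (p * s / (N:ℝ)) * J ^ (p / q) ≤
        J ^ (p * s / (N:ℝ)) * (ENNReal.ofReal Cc * E) := by
      calc J ^ (p * s / (N:ℝ)) * J ^ (p / q)
          ≤ ENNReal.ofReal Cc * J ^ (p * s / (N : ℝ)) * E := h2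
        _ = J ^ (p * s / (N:ℝ)) * (ENNReal.ofReal Cc * E) := by ring
    exact (ENNReal.mul_le_mul_iff_right ha0 hat).mp h3
  rw [hIq, ENNReal.ofReal_mul (inv_nonneg.mpr hCc.le),
    ENNReal.toReal_rpow, ENNReal.ofReal_toReal
      (ENNReal.rpow_ne_top_of_nonneg (by positivity) hJtop),
    ENNReal.ofReal_inv_of_pos hCc]
  calc (ENNReal.ofReal Cc)⁻¹ * J ^ (p / q)
      ≤ (ENNReal.ofReal Cc)⁻¹ * (ENNReal.ofReal Cc * E) := by gcongr
    _ = E := by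
        rw [← mul_assoc, ENNReal.inv_mul_cancel
          (by simpa [ENNReal.ofReal_eq_zero, not_le] using hCc) ENNReal.ofReal_ne_top,
          one_mul]
end
end

section
/- Let p ≥ 1 and α > 0. There exists a positive constant c = c(p, α) such that for all real numbers a, b ≥ 0: |a−b|^{p−2}(a−b)(a^α − b^α) ≥ c · |a^{(p+α−1)/p} − b^{(p+α−1)/p}|^p, where for a = b the left-hand side is understood as 0. -/
open Real

/-- Upper bound in `t`-form: for `t ∈ [0,1]` and `r > 0`, `1 - t^r ≤ max 1 r * (1 - t)`. -/
lemma tform_upper {r t : ℝ} (hr : 0 < r) (ht0 : 0 ≤ t) (ht1 : t ≤ 1) :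
    1 - t ^ r ≤ max 1 r * (1 - t) := by
  rcases le_total 1 r with h | h
  · rw [max_eq_right h]
    have hs : -1 ≤ t - 1 := by linarith
    have := one_add_mul_self_le_rpow_one_add hs h
    rw [add_sub_cancel] at this
    nlinarith
  · rw [max_eq_left h]
    rcases eq_or_lt_of_le ht0 with h0 | h0
    · rw [← h0, Real.zero_rpow hr.ne']; linarith
    · have : t ^ (1:ℝ) ≤ t ^ r := Real.rpow_le_rpow_of_exponent_ge h0 ht1 h
      rw [Real.rpow_one] at this; linarith

/-- Lower bound in `t`-form: for `t ∈ [0,1]` and `r > 0`, `min 1 r * (1 - t) ≤ 1 - t^r`. -/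
lemma tform_lower {r t : ℝ} (hr : 0 < r) (ht0 : 0 ≤ t) (ht1 : t ≤ 1) :
    min 1 r * (1 - t) ≤ 1 - t ^ r := by
  rcases le_total 1 r with h | h
  · rw [min_eq_left h]
    rcases eq_or_lt_of_le ht0 with h0 | h0
    · rw [← h0, Real.zero_rpow hr.ne']; linarith
    · have : t ^ r ≤ t ^ (1:ℝ) := Real.rpow_le_rpow_of_exponent_ge h0 ht1 h
      rw [Real.rpow_one] at this; linarith
  · rw [min_eq_right h]
    have hs : -1 ≤ t - 1 := by linarith
    have := rpow_one_add_le_one_add_mul_self hs hr.le h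
    rw [add_sub_cancel] at this
    nlinarith

/-- Lifted upper bound: `a^r - b^r ≤ max 1 r * (a^(r-1) * (a-b))` for `0 ≤ b ≤ a`, `a > 0`. -/
lemma lift_upper {r a b : ℝ} (hr : 0 < r) (ha : 0 < a) (hb : 0 ≤ b) (hab : b ≤ a) :
    a ^ r - b ^ r ≤ max 1 r * (a ^ (r - 1) * (a - b)) := by
  have ht0 : 0 ≤ b / a := div_nonneg hb ha.le
  have ht1 : b / a ≤ 1 := (div_le_one ha).mpr hab
  have key := tform_upper hr ht0 ht1
  have har : (0:ℝ) < a ^ r := Real.rpow_pos_of_pos ha r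
  have hmul := mul_le_mul_of_nonneg_left key har.le
  have h1 : a ^ r * (b / a) ^ r = b ^ r := by
    rw [Real.div_rpow hb ha.le]; field_simp
  have h2 : a ^ r * (b / a) = a ^ (r - 1) * b := by
    rw [Real.rpow_sub_one ha.ne']; field_simp
  have h3 : a ^ (r - 1) * a = a ^ r := by
    rw [Real.rpow_sub_one ha.ne']; field_simp
  calc a ^ r - b ^ r = a ^ r * (1 - (b / a) ^ r) := by rw [mul_sub, mul_one, h1]
    _ ≤ a ^ r * (max 1 r * (1 - b / a)) := hmul
    _ = max 1 r * (a ^ (r - 1) * (a - b)) := by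
        linear_combination (-(max 1 r)) * h2 + (-(max 1 r)) * h3

/-- Lifted lower bound: `min 1 r * (a^(r-1) * (a-b)) ≤ a^r - b^r` for `0 ≤ b ≤ a`, `a > 0`. -/
lemma lift_lower {r a b : ℝ} (hr : 0 < r) (ha : 0 < a) (hb : 0 ≤ b) (hab : b ≤ a) :
    min 1 r * (a ^ (r - 1) * (a - b)) ≤ a ^ r - b ^ r := by
  have ht0 : 0 ≤ b / a := div_nonneg hb ha.le
  have ht1 : b / a ≤ 1 := (div_le_one ha).mpr hab
  have key := tform_lower hr ht0 ht1
  have har : (0:ℝ) < a ^ r := Real.rpow_pos_of_pos ha r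
  have hmul := mul_le_mul_of_nonneg_left key har.le
  have h1 : a ^ r * (b / a) ^ r = b ^ r := by
    rw [Real.div_rpow hb ha.le]; field_simp
  have h2 : a ^ r * (b / a) = a ^ (r - 1) * b := by
    rw [Real.rpow_sub_one ha.ne']; field_simp
  have h3 : a ^ (r - 1) * a = a ^ r := by
    rw [Real.rpow_sub_one ha.ne']; field_simp
  calc min 1 r * (a ^ (r - 1) * (a - b))
      = a ^ r * (min 1 r * (1 - b / a)) := by
        linear_combination (min 1 r) * h2 + (min 1 r) * h3
    _ ≤ a ^ r * (1 - (b / a) ^ r) := hmul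
    _ = a ^ r - b ^ r := by rw [mul_sub, mul_one, h1]

/-- Main helper, for the ordered case `b ≤ a`. -/
lemma helper_ordered (p α : ℝ) (hp : 1 ≤ p) (hα : 0 < α) (a b : ℝ) (ha : 0 ≤ a)
    (hb : 0 ≤ b) (hab : b ≤ a) :
    (min 1 α / (max 1 ((p + α - 1) / p)) ^ p) *
        |a ^ ((p + α - 1) / p) - b ^ ((p + α - 1) / p)| ^ p ≤
      |a - b| ^ (p - 2) * (a - b) * (a ^ α - b ^ α) := by
  set q : ℝ := (p + α - 1) / p with hq_def
  have hp0 : (0:ℝ) < p := lt_of_lt_of_le one_pos hp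
  have hq : 0 < q := div_pos (by linarith) hp0
  have hM : (0:ℝ) < max 1 q := lt_of_lt_of_le one_pos (le_max_left _ _)
  have hMp : (0:ℝ) < (max 1 q) ^ p := Real.rpow_pos_of_pos hM p
  have hm : (0:ℝ) < min 1 α := lt_min one_pos hα
  rcases eq_or_lt_of_le hab with rfl | hlt
  · simp [abs_nonneg, Real.zero_rpow hp0.ne']
  have ha' : 0 < a := lt_of_le_of_lt hb hlt
  have hd : 0 < a - b := by linarith
  -- rewrite absolute values
  have hqab : b ^ q ≤ a ^ q := Real.rpow_le_rpow hb hab hq.le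
  have hαab : b ^ α ≤ a ^ α := Real.rpow_le_rpow hb hab hα.le
  rw [abs_of_nonneg (sub_nonneg.mpr hqab), abs_of_pos hd]
  -- (a-b)^(p-2) * (a-b) = (a-b)^(p-1)
  have hpow : (a - b) ^ (p - 2) * (a - b) = (a - b) ^ (p - 1) := by
    rw [show p - 1 = (p - 2) + 1 by ring, Real.rpow_add_one hd.ne']
  rw [hpow]
  -- key bounds
  have hA := lift_upper hq ha' hb hab
  have hB := lift_lower hα ha' hb hab
  have hq1p : (q - 1) * p = α - 1 := by
    rw [hq_def]; field_simp; ring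
  have haα : (0:ℝ) < a ^ (α - 1) := Real.rpow_pos_of_pos ha' _
  have haq : (0:ℝ) < a ^ (q - 1) := Real.rpow_pos_of_pos ha' _
  -- raise hA to the power p
  have hAnn : 0 ≤ a ^ q - b ^ q := sub_nonneg.mpr hqab
  have hApow : (a ^ q - b ^ q) ^ p ≤ (max 1 q) ^ p * (a ^ (α - 1) * (a - b) ^ p) := by
    have h1 : (a ^ q - b ^ q) ^ p ≤ (max 1 q * (a ^ (q - 1) * (a - b))) ^ p :=
      Real.rpow_le_rpow hAnn hA hp0.le
    have h2 : (max 1 q * (a ^ (q - 1) * (a - b))) ^ p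
        = (max 1 q) ^ p * ((a ^ (q - 1)) ^ p * (a - b) ^ p) := by
      rw [Real.mul_rpow hM.le (by positivity), Real.mul_rpow haq.le hd.le]
    have h3 : (a ^ (q - 1)) ^ p = a ^ (α - 1) := by
      rw [← Real.rpow_mul ha'.le, hq1p]
    calc (a ^ q - b ^ q) ^ p ≤ (max 1 q * (a ^ (q - 1) * (a - b))) ^ p := h1
      _ = (max 1 q) ^ p * ((a ^ (q - 1)) ^ p * (a - b) ^ p) := h2
      _ = (max 1 q) ^ p * (a ^ (α - 1) * (a - b) ^ p) := by rw [h3]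
  -- combine
  have hRHS : min 1 α * (a ^ (α - 1) * (a - b) ^ p) ≤ (a - b) ^ (p - 1) * (a ^ α - b ^ α) := by
    have hd1 : (a - b) ^ (p - 1) * (a - b) = (a - b) ^ p := by
      rw [← Real.rpow_add_one hd.ne', sub_add_cancel]
    have := mul_le_mul_of_nonneg_left hB (Real.rpow_pos_of_pos hd (p - 1)).le
    calc min 1 α * (a ^ (α - 1) * (a - b) ^ p)
        = (a - b) ^ (p - 1) * (min 1 α * (a ^ (α - 1) * (a - b))) := by
          rw [← hd1]; ring
      _ ≤ (a - b) ^ (p - 1) * (a ^ α - b ^ α) := this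
  calc (min 1 α / (max 1 q) ^ p) * (a ^ q - b ^ q) ^ p
      ≤ (min 1 α / (max 1 q) ^ p) * ((max 1 q) ^ p * (a ^ (α - 1) * (a - b) ^ p)) := by
        exact mul_le_mul_of_nonneg_left hApow (by positivity)
    _ = min 1 α * (a ^ (α - 1) * (a - b) ^ p) := by field_simp
    _ ≤ (a - b) ^ (p - 1) * (a ^ α - b ^ α) := hRHS

/-- **Algebraic inequality.** For `p ≥ 1` and `α > 0` there is `c = c(p,α) > 0` such that for
all `a, b ≥ 0`:
`|a-b|^{p-2}(a-b)(a^α - b^α) ≥ c |a^{(p+α-1)/p} - b^{(p+α-1)/p}|^p`.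
(When `a = b` both the factors `a - b` and `a^α - b^α` vanish, so the left-hand side is `0`.) -/
theorem algebraic_inequality_power_test (p α : ℝ) (hp : 1 ≤ p) (hα : 0 < α) :
    ∃ c : ℝ, 0 < c ∧ ∀ a b : ℝ, 0 ≤ a → 0 ≤ b →
      c * |a ^ ((p + α - 1) / p) - b ^ ((p + α - 1) / p)| ^ p ≤
        |a - b| ^ (p - 2) * (a - b) * (a ^ α - b ^ α) := by
  have hp0 : (0:ℝ) < p := lt_of_lt_of_le one_pos hp
  have hM : (0:ℝ) < max 1 ((p + α - 1) / p) := lt_of_lt_of_le one_pos (le_max_left _ _)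
  refine ⟨min 1 α / (max 1 ((p + α - 1) / p)) ^ p, by positivity, fun a b ha hb => ?_⟩
  rcases le_total b a with hab | hab
  · exact helper_ordered p α hp hα a b ha hb hab
  · calc (min 1 α / (max 1 ((p + α - 1) / p)) ^ p) *
        |a ^ ((p + α - 1) / p) - b ^ ((p + α - 1) / p)| ^ p
        = (min 1 α / (max 1 ((p + α - 1) / p)) ^ p) *
          |b ^ ((p + α - 1) / p) - a ^ ((p + α - 1) / p)| ^ p := by rw [abs_sub_comm]
      _ ≤ |b - a| ^ (p - 2) * (b - a) * (b ^ α - a ^ α) :=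
          helper_ordered p α hp hα b a hb ha hab
      _ = |a - b| ^ (p - 2) * (a - b) * (a ^ α - b ^ α) := by rw [abs_sub_comm b a]; ring
end

section
/- Let p ≥ 1 and α ≥ 1. There exists a positive constant c = c(p, α) such that for all real numbers a, b ≥ 0: (a+b)^{α−1} |a−b|^p ≤ c · |a^{(p+α−1)/p} − b^{(p+α−1)/p}|^p. -/
/-! With `γ = (α - 1)/p`, the exponent on the right is `γ + 1`. For `b ≤ a` the mean value bound
`a^γ (a - b) ≤ a^(γ+1) - b^(γ+1)` and `a + b ≤ 2a` give
`(a + b)^(α-1) (a - b)^p ≤ 2^(α-1) (a^γ (a - b))^p ≤ 2^(α-1) (a^(γ+1) - b^(γ+1))^p`,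
so `c = 2^(α-1)` works; the case `a ≤ b` follows by symmetry. -/

open Real

lemma rpow_mul_sub_le_rpow_add_one_sub {a b γ : ℝ} (hb : 0 ≤ b) (hba : b ≤ a) (hγ : 0 ≤ γ) :
    a ^ γ * (a - b) ≤ a ^ (γ + 1) - b ^ (γ + 1) := by
  have ha : 0 ≤ a := hb.trans hba
  rw [rpow_add_one' ha (by linarith), rpow_add_one' hb (by linarith)]
  nlinarith [mul_le_mul_of_nonneg_right (rpow_le_rpow hb hba hγ) hb]

lemma add_rpow_mul_sub_rpow_le_of_le {p q a b : ℝ} (hp : 0 < p) (hq : 0 ≤ q) (hb : 0 ≤ b)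
    (hba : b ≤ a) :
    (a + b) ^ q * (a - b) ^ p ≤ 2 ^ q * (a ^ (q / p + 1) - b ^ (q / p + 1)) ^ p := by
  have ha : 0 ≤ a := hb.trans hba
  have hab : 0 ≤ a - b := sub_nonneg.mpr hba
  calc (a + b) ^ q * (a - b) ^ p
      ≤ (2 * a) ^ q * (a - b) ^ p := by gcongr; linarith
    _ = 2 ^ q * (a ^ (q / p) * (a - b)) ^ p := by
        rw [mul_rpow two_pos.le ha, mul_rpow (rpow_nonneg ha _) hab, ← rpow_mul ha,
          div_mul_cancel₀ q hp.ne', mul_assoc]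
    _ ≤ 2 ^ q * (a ^ (q / p + 1) - b ^ (q / p + 1)) ^ p := by
        gcongr
        exact rpow_mul_sub_le_rpow_add_one_sub hb hba (div_nonneg hq hp.le)

lemma add_rpow_mul_abs_sub_rpow_le {p q a b : ℝ} (hp : 0 < p) (hq : 0 ≤ q) (ha : 0 ≤ a)
    (hb : 0 ≤ b) :
    (a + b) ^ q * |a - b| ^ p ≤ 2 ^ q * |a ^ (q / p + 1) - b ^ (q / p + 1)| ^ p := by
  wlog hba : b ≤ a generalizing a b
  · simpa only [add_comm, abs_sub_comm] using this hb ha (le_of_not_ge hba)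
  have hγ : 0 ≤ q / p + 1 := by positivity
  rw [abs_of_nonneg (sub_nonneg.mpr hba),
    abs_of_nonneg (sub_nonneg.mpr (rpow_le_rpow hb hba hγ))]
  exact add_rpow_mul_sub_rpow_le_of_le hp hq hb hba

/-- **Algebraic inequality.** For `p ≥ 1` and `α ≥ 1` there is `c = c(p,α) > 0` such that for
all `a, b ≥ 0`:
`(a+b)^{α-1} |a-b|^p ≤ c |a^{(p+α-1)/p} - b^{(p+α-1)/p}|^p`. -/
theorem algebraic_inequality_sum_power (p α : ℝ) (hp : 1 ≤ p) (hα : 1 ≤ α) :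
    ∃ c : ℝ, 0 < c ∧ ∀ a b : ℝ, 0 ≤ a → 0 ≤ b →
      (a + b) ^ (α - 1) * |a - b| ^ p ≤
        c * |a ^ ((p + α - 1) / p) - b ^ ((p + α - 1) / p)| ^ p := by
  have hp0 : 0 < p := one_pos.trans_le hp
  have hexp : (p + α - 1) / p = (α - 1) / p + 1 := by field_simp; ring
  refine ⟨2 ^ (α - 1), by positivity, fun a b ha hb => ?_⟩
  rw [hexp]
  exact add_rpow_mul_abs_sub_rpow_le hp0 (by linarith) ha hb
end

section
/- Let 1 < p < 2. There exist constants C₁ and C₂ with 0 < C₁ < 1 < C₂ such that for all a₁, a₂ ∈ ℝ and all b₁, b₂ ≥ 0: |a₁−a₂|^{p−2}(a₁−a₂)(a₁ b₁ − a₂ b₂) ≥ C₁ · |a₁ b₁^{1/p} − a₂ b₂^{1/p}|^p − C₂ · (max{|a₁|, |a₂|})^p · |b₁^{1/p} − b₂^{1/p}|^p, where for a₁ = a₂ the first factor is understood as 0. -/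
open Real

private lemma rpow_mul_self' {X q : ℝ} (hX : 0 ≤ X) (hq : q + 1 ≠ 0) :
    X ^ q * X = X ^ (q + 1) := by
  rcases hX.eq_or_lt with h | h
  · rw [← h, mul_zero, Real.zero_rpow hq]
  · rw [Real.rpow_add_one h.ne']

private lemma core_ineq {p : ℝ} (hp1 : 1 < p) (hp2 : p < 2) (a₁ a₂ b₁ b₂ : ℝ) :
    |a₁ - a₂| ^ p * b₁ - |a₁ - a₂| ^ (p - 1) * |a₂| * |b₁ - b₂|
      ≤ |a₁ - a₂| ^ (p - 2) * (a₁ - a₂) * (a₁ * b₁ - a₂ * b₂) := by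
  set X := |a₁ - a₂| with hXdef
  have hX : 0 ≤ X := abs_nonneg _
  have e1 : X ^ (p - 2) * X = X ^ (p - 1) := by
    have := rpow_mul_self' (q := p - 2) hX (by intro h; apply absurd hp1; linarith)
    rwa [show p - 2 + 1 = p - 1 by ring] at this
  have e2 : X ^ (p - 1) * X = X ^ p := by
    have := rpow_mul_self' (q := p - 1) hX (by intro h; apply absurd hp1; linarith)
    rwa [show p - 1 + 1 = p by ring] at this
  have hsq : (a₁ - a₂) * (a₁ - a₂) = X * X := (abs_mul_abs_self _).symm
  have key1 : X ^ (p - 2) * (a₁ - a₂) * ((a₁ - a₂) * b₁) = X ^ p * b₁ := by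
    calc X ^ (p - 2) * (a₁ - a₂) * ((a₁ - a₂) * b₁)
        = X ^ (p - 2) * ((a₁ - a₂) * (a₁ - a₂)) * b₁ := by ring
      _ = X ^ (p - 2) * (X * X) * b₁ := by rw [hsq]
      _ = X ^ (p - 2) * X * X * b₁ := by ring
      _ = X ^ p * b₁ := by rw [e1, e2]
  have key2 : -(X ^ (p - 1) * |a₂| * |b₁ - b₂|)
      ≤ X ^ (p - 2) * (a₁ - a₂) * (a₂ * (b₁ - b₂)) := by
    have habs : |X ^ (p - 2) * (a₁ - a₂) * (a₂ * (b₁ - b₂))|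
        = X ^ (p - 1) * |a₂| * |b₁ - b₂| := by
      rw [abs_mul, abs_mul, abs_mul, abs_of_nonneg (Real.rpow_nonneg hX _), ← hXdef, ← e1]
      ring
    have := neg_abs_le (X ^ (p - 2) * (a₁ - a₂) * (a₂ * (b₁ - b₂)))
    rw [habs] at this
    exact this
  have expand : X ^ (p - 2) * (a₁ - a₂) * (a₁ * b₁ - a₂ * b₂)
      = X ^ (p - 2) * (a₁ - a₂) * ((a₁ - a₂) * b₁)
        + X ^ (p - 2) * (a₁ - a₂) * (a₂ * (b₁ - b₂)) := by ring
  rw [expand, key1]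
  linarith

private lemma young_ineq {p u v : ℝ} (hp1 : 1 < p) (hp2 : p < 2) (hu : 0 ≤ u) (hv : 0 ≤ v) :
    p * u ^ (p - 1) * v ≤ (1 / 2) * u ^ p + (2 * p ^ 2) * v ^ p := by
  have hup : 0 ≤ u ^ (p - 1) := Real.rpow_nonneg hu _
  have hvp : 0 ≤ v ^ p := Real.rpow_nonneg hv _
  have hupp : 0 ≤ u ^ p := Real.rpow_nonneg hu _
  have eu : u ^ (p - 1) * u = u ^ p := by
    have := rpow_mul_self' (q := p - 1) hu (by intro h; apply absurd hp1; linarith)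
    rwa [show p - 1 + 1 = p by ring] at this
  rcases le_or_gt v (u / (2 * p)) with h | h
  · -- p * u^{p-1} * v ≤ p * u^{p-1} * (u/(2p)) = u^p / 2
    have hm : p * u ^ (p - 1) * v ≤ p * u ^ (p - 1) * (u / (2 * p)) :=
      mul_le_mul_of_nonneg_left h (by positivity)
    have : p * u ^ (p - 1) * (u / (2 * p)) = (1 / 2) * u ^ p := by
      rw [← eu]; field_simp
    have hnn : (0:ℝ) ≤ 2 * p ^ 2 * v ^ p := by positivity
    linarith
  · have hv' : 0 < v := lt_of_le_of_lt (by positivity) h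
    have huv : u ≤ 2 * p * v := by
      rw [div_lt_iff₀ (by positivity)] at h
      linarith
    have h2 : u ^ (p - 1) ≤ (2 * p * v) ^ (p - 1) :=
      Real.rpow_le_rpow hu huv (by linarith)
    have h3 : (2 * p * v) ^ (p - 1) = (2 * p) ^ (p - 1) * v ^ (p - 1) :=
      Real.mul_rpow (by positivity) hv'.le
    have h4 : (2 * p) ^ (p - 1) ≤ 2 * p := by
      calc (2 * p) ^ (p - 1) ≤ (2 * p) ^ (1 : ℝ) :=
            Real.rpow_le_rpow_of_exponent_le (by linarith) (by linarith)
        _ = 2 * p := Real.rpow_one _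
    have ev : v ^ (p - 1) * v = v ^ p := by
      have := rpow_mul_self' (q := p - 1) hv'.le (by intro h; apply absurd hp1; linarith)
      rwa [show p - 1 + 1 = p by ring] at this
    have hvp1 : 0 ≤ v ^ (p - 1) := Real.rpow_nonneg hv'.le _
    have chain : p * u ^ (p - 1) * v ≤ p * ((2 * p) * v ^ (p - 1)) * v := by
      have : u ^ (p - 1) ≤ (2 * p) * v ^ (p - 1) := by
        calc u ^ (p - 1) ≤ (2 * p) ^ (p - 1) * v ^ (p - 1) := h3 ▸ h2
          _ ≤ (2 * p) * v ^ (p - 1) := mul_le_mul_of_nonneg_right h4 hvp1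
      nlinarith
    have : p * ((2 * p) * v ^ (p - 1)) * v = 2 * p ^ 2 * v ^ p := by
      rw [← ev]; ring
    nlinarith

private lemma diff_rpow_le {p s t : ℝ} (hp : 1 ≤ p) (hs : 0 ≤ s) (hst : s ≤ t) :
    t ^ p - s ^ p ≤ p * t ^ (p - 1) * (t - s) := by
  rcases (hs.trans hst).eq_or_lt with h | ht
  · have hs0 : s = 0 := le_antisymm (h ▸ hst) hs
    rw [← h, hs0]
    simp
  · have ht' : (0:ℝ) < t := ht
    have hb := one_add_mul_self_le_rpow_one_add (s := s / t - 1)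
      (by
        have h0 : 0 ≤ s / t := by positivity
        linarith) hp
    rw [show (1 : ℝ) + (s / t - 1) = s / t by ring, Real.div_rpow hs ht'.le] at hb
    have h2 : t ^ p = t ^ (p - 1) * t := by
      rw [← Real.rpow_add_one ht'.ne' (p - 1), sub_add_cancel]
    have h3 : (0:ℝ) < t ^ p := Real.rpow_pos_of_pos ht' p
    have h4 := mul_le_mul_of_nonneg_right hb h3.le
    rw [div_mul_cancel₀ _ h3.ne'] at h4
    have h5 : (1 + p * (s / t - 1)) * t ^ p = t ^ p + p * (s * t ^ (p-1)) - p * t ^ p := by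
      rw [h2]; field_simp; ring
    rw [h5] at h4
    nlinarith [h4, h2]

set_option maxHeartbeats 1000000 in
/-- **Discrete "integration by parts" inequality.** For `1 < p < 2` there are constants
`0 < C₁ < 1 < C₂` such that for all `a₁, a₂ ∈ ℝ` and all `b₁, b₂ ≥ 0`:
`|a₁-a₂|^{p-2}(a₁-a₂)(a₁b₁ - a₂b₂)
  ≥ C₁ |a₁ b₁^{1/p} - a₂ b₂^{1/p}|^p − C₂ (max{|a₁|,|a₂|})^p |b₁^{1/p} - b₂^{1/p}|^p`.
(When `a₁ = a₂` the factor `a₁ - a₂` vanishes, so the left-hand side is `0`.) -/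
theorem algebraic_inequality_product_test (p : ℝ) (hp1 : 1 < p) (hp2 : p < 2) :
    ∃ C₁ C₂ : ℝ, 0 < C₁ ∧ C₁ < 1 ∧ 1 < C₂ ∧
      ∀ a₁ a₂ b₁ b₂ : ℝ, 0 ≤ b₁ → 0 ≤ b₂ →
        C₁ * |a₁ * b₁ ^ (1 / p) - a₂ * b₂ ^ (1 / p)| ^ p -
            C₂ * (max |a₁| |a₂|) ^ p * |b₁ ^ (1 / p) - b₂ ^ (1 / p)| ^ p ≤
          |a₁ - a₂| ^ (p - 2) * (a₁ - a₂) * (a₁ * b₁ - a₂ * b₂) := by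
  have hp0 : 0 < p := by linarith
  have h2p1 : (1:ℝ) ≤ (2:ℝ) ^ p := by
    have h := Real.rpow_le_rpow_of_exponent_le (x := 2) one_le_two (by linarith : (0:ℝ) ≤ p)
    rwa [Real.rpow_zero] at h
  have h2ppos : (0:ℝ) < (2:ℝ) ^ p := Real.rpow_pos_of_pos two_pos p
  refine ⟨1 / (2 * (2:ℝ) ^ p), 2 * p ^ 2 + 1, by positivity, ?_, by nlinarith, ?_⟩
  · rw [div_lt_one (by positivity)]; linarith
  intro a₁ a₂ b₁ b₂ hb₁ hb₂
  set β₁ := b₁ ^ (1 / p) with hβ₁def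
  set β₂ := b₂ ^ (1 / p) with hβ₂def
  have hβ₁ : 0 ≤ β₁ := Real.rpow_nonneg hb₁ _
  have hβ₂ : 0 ≤ β₂ := Real.rpow_nonneg hb₂ _
  have hbe₁ : β₁ ^ p = b₁ := by
    rw [hβ₁def, ← Real.rpow_mul hb₁, one_div, inv_mul_cancel₀ hp0.ne', Real.rpow_one]
  have hbe₂ : β₂ ^ p = b₂ := by
    rw [hβ₂def, ← Real.rpow_mul hb₂, one_div, inv_mul_cancel₀ hp0.ne', Real.rpow_one]
  set X := |a₁ - a₂| with hXdef
  set M := max |a₁| |a₂| with hMdef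
  set Δ := |β₁ - β₂| with hΔdef
  set W := max β₁ β₂ with hWdef
  set u := X * W with hudef
  set v := M * Δ with hvdef
  have hX : 0 ≤ X := abs_nonneg _
  have hM : 0 ≤ M := le_trans (abs_nonneg a₁) (le_max_left _ _)
  have hΔ : 0 ≤ Δ := abs_nonneg _
  have hW : 0 ≤ W := le_trans hβ₁ (le_max_left _ _)
  have hu : 0 ≤ u := mul_nonneg hX hW
  have hv : 0 ≤ v := mul_nonneg hM hΔ
  have hWp : W ^ p = max b₁ b₂ := by
    rcases le_total β₁ β₂ with h | h
    · have hb : b₁ ≤ b₂ := by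
        rw [← hbe₁, ← hbe₂]; exact Real.rpow_le_rpow hβ₁ h hp0.le
      rw [hWdef, max_eq_right h, max_eq_right hb, hbe₂]
    · have hb : b₂ ≤ b₁ := by
        rw [← hbe₁, ← hbe₂]; exact Real.rpow_le_rpow hβ₂ h hp0.le
      rw [hWdef, max_eq_left h, max_eq_left hb, hbe₁]
  have hup1 : u ^ (p - 1) = X ^ (p - 1) * W ^ (p - 1) := Real.mul_rpow hX hW
  have huq : u ^ p = X ^ p * max b₁ b₂ := by
    rw [hudef, Real.mul_rpow hX hW, hWp]
  have hvq : M ^ p * Δ ^ p = v ^ p := (Real.mul_rpow hM hΔ).symm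
  -- difference of p-th powers bound
  have hd : |b₁ - b₂| ≤ p * W ^ (p - 1) * Δ := by
    rcases le_total β₂ β₁ with h | h
    · have hb : b₂ ≤ b₁ := by
        rw [← hbe₁, ← hbe₂]; exact Real.rpow_le_rpow hβ₂ h hp0.le
      have hkey := diff_rpow_le hp1.le hβ₂ h
      rw [hbe₁, hbe₂] at hkey
      rw [abs_of_nonneg (by linarith), hWdef, max_eq_left h, hΔdef,
        abs_of_nonneg (by linarith : (0:ℝ) ≤ β₁ - β₂)]
      exact hkey
    · have hb : b₁ ≤ b₂ := by
        rw [← hbe₁, ← hbe₂]; exact Real.rpow_le_rpow hβ₁ h hp0.le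
      have hkey := diff_rpow_le hp1.le hβ₁ h
      rw [hbe₁, hbe₂] at hkey
      rw [abs_sub_comm, abs_of_nonneg (by linarith), hWdef, max_eq_right h, hΔdef,
        abs_sub_comm, abs_of_nonneg (by linarith : (0:ℝ) ≤ β₂ - β₁)]
      exact hkey
  -- the two core bounds
  have h1 := core_ineq hp1 hp2 a₁ a₂ b₁ b₂
  have h2 := core_ineq hp1 hp2 (-a₂) (-a₁) b₂ b₁
  rw [show -a₂ - -a₁ = a₁ - a₂ from by ring,
    show -a₂ * b₂ - -a₁ * b₁ = a₁ * b₁ - a₂ * b₂ from by ring,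
    abs_neg, abs_sub_comm b₂ b₁] at h2
  have hbound : X ^ (p - 1) * M * |b₁ - b₂| ≤ p * u ^ (p - 1) * v := by
    calc X ^ (p - 1) * M * |b₁ - b₂|
        ≤ X ^ (p - 1) * M * (p * W ^ (p - 1) * Δ) := by
          apply mul_le_mul_of_nonneg_left hd (by positivity)
      _ = p * u ^ (p - 1) * v := by rw [hup1, hvdef]; ring
  have hXp1 : (0:ℝ) ≤ X ^ (p - 1) := Real.rpow_nonneg hX _
  have hcore : X ^ p * max b₁ b₂ - p * u ^ (p - 1) * v ≤
      X ^ (p - 2) * (a₁ - a₂) * (a₁ * b₁ - a₂ * b₂) := by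
    rcases le_total b₂ b₁ with h | h
    · rw [max_eq_left h]
      have hA : X ^ (p - 1) * |a₂| * |b₁ - b₂| ≤ p * u ^ (p - 1) * v := by
        refine le_trans ?_ hbound
        have : |a₂| ≤ M := le_max_right _ _
        have := mul_le_mul_of_nonneg_right
          (mul_le_mul_of_nonneg_left this hXp1) (abs_nonneg (b₁ - b₂))
        linarith
      linarith
    · rw [max_eq_right h]
      have hA : X ^ (p - 1) * |a₁| * |b₁ - b₂| ≤ p * u ^ (p - 1) * v := by
        refine le_trans ?_ hbound
        have : |a₁| ≤ M := le_max_left _ _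
        have := mul_le_mul_of_nonneg_right
          (mul_le_mul_of_nonneg_left this hXp1) (abs_nonneg (b₁ - b₂))
        linarith
      linarith
  -- bound on |a₁ β₁ - a₂ β₂|
  have hQ : |a₁ * β₁ - a₂ * β₂| ≤ u + v := by
    calc |a₁ * β₁ - a₂ * β₂| = |(a₁ - a₂) * β₁ + a₂ * (β₁ - β₂)| := by congr 1; ring
      _ ≤ |(a₁ - a₂) * β₁| + |a₂ * (β₁ - β₂)| := abs_add_le _ _
      _ = X * β₁ + |a₂| * Δ := by rw [abs_mul, abs_mul, abs_of_nonneg hβ₁]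
      _ ≤ X * W + M * Δ := by
          gcongr
          · exact le_max_left _ _
          · exact le_max_right _ _
  have hQp : |a₁ * β₁ - a₂ * β₂| ^ p ≤ (2:ℝ) ^ p * (u ^ p + v ^ p) := by
    have hm : u + v ≤ 2 * max u v := by
      rcases le_total u v with h | h
      · rw [max_eq_right h]; linarith
      · rw [max_eq_left h]; linarith
    have hmaxnn : (0:ℝ) ≤ max u v := le_trans hu (le_max_left _ _)
    calc |a₁ * β₁ - a₂ * β₂| ^ p ≤ (u + v) ^ p :=
          Real.rpow_le_rpow (abs_nonneg _) hQ hp0.le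
      _ ≤ (2 * max u v) ^ p := Real.rpow_le_rpow (by linarith) hm hp0.le
      _ = (2:ℝ) ^ p * (max u v) ^ p := Real.mul_rpow (by norm_num) hmaxnn
      _ ≤ (2:ℝ) ^ p * (u ^ p + v ^ p) := by
          have hux : (0:ℝ) ≤ u ^ p := Real.rpow_nonneg hu _
          have hvx : (0:ℝ) ≤ v ^ p := Real.rpow_nonneg hv _
          have : (max u v) ^ p ≤ u ^ p + v ^ p := by
            rcases le_total u v with h | h
            · rw [max_eq_right h]; linarith
            · rw [max_eq_left h]; linarith
          nlinarith
  have hupnn : (0:ℝ) ≤ u ^ p := Real.rpow_nonneg hu _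
  have hvpnn : (0:ℝ) ≤ v ^ p := Real.rpow_nonneg hv _
  have hC1 : (0:ℝ) ≤ 1 / (2 * (2:ℝ) ^ p) := by positivity
  have hQ2 : 1 / (2 * (2:ℝ) ^ p) * |a₁ * β₁ - a₂ * β₂| ^ p
      ≤ 1 / 2 * u ^ p + 1 / 2 * v ^ p := by
    have hmul := mul_le_mul_of_nonneg_left hQp hC1
    have heq : 1 / (2 * (2:ℝ) ^ p) * ((2:ℝ) ^ p * (u ^ p + v ^ p))
        = 1 / 2 * u ^ p + 1 / 2 * v ^ p := by
      field_simp
    linarith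
  have hyoung := young_ineq hp1 hp2 hu hv
  rw [mul_assoc (2 * p ^ 2 + 1), hvq]
  have hcore' : u ^ p - p * u ^ (p - 1) * v ≤
      X ^ (p - 2) * (a₁ - a₂) * (a₁ * b₁ - a₂ * b₂) := by
    rw [huq]; exact hcore
  linarith
end

section
/- Let N ≥ 2 be an integer, 0 < s < 1 and p > 1. Then the kernel K satisfies the functional equation K(1/ξ) = ξ^{N+ps} · K(ξ) for every ξ > 0. -/
open MeasureTheory Real Set Filter Metric
open scoped ENNReal Topology NNReal

noncomputable section

/-- The spherical kernel `K(σ)`. -/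
def sphereKernel (N : ℕ) (p s : ℝ) (e : Euc N) (σ : ℝ) : ℝ :=
  ∫ y in Metric.sphere (0 : Euc N) 1, ‖e - σ • y‖ ^ (-((N : ℝ) + p * s)) ∂ μH[(N : ℝ) - 1]

lemma norm_sub_smul_symm {N : ℕ} (e y : Euc N) (he : ‖e‖ = 1) (hy : ‖y‖ = 1) (ξ : ℝ) :
    ‖ξ • e - y‖ = ‖e - ξ • y‖ := by
  have h1 : ‖ξ • e - y‖ ^ 2 = ‖e - ξ • y‖ ^ 2 := by
    rw [norm_sub_sq_real, norm_sub_sq_real, norm_smul, norm_smul, he, hy,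
      real_inner_smul_left, real_inner_smul_right]
    ring
  nlinarith [norm_nonneg (ξ • e - y), norm_nonneg (e - ξ • y)]

/-- **Functional equation for the kernel `K`:** `K(1/ξ) = ξ^{N+ps} K(ξ)` for `ξ > 0`. -/
theorem sphereKernel_functional_equation (N : ℕ) (hN : 2 ≤ N) (s p : ℝ)
    (hs0 : 0 < s) (hs1 : s < 1) (hp1 : 1 < p)
    (e : Euc N) (he : ‖e‖ = 1) :
    ∀ ξ : ℝ, 0 < ξ →
      sphereKernel N p s e (1 / ξ) = ξ ^ ((N : ℝ) + p * s) * sphereKernel N p s e ξ := by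
  intro ξ hξ
  rw [sphereKernel, sphereKernel, ← MeasureTheory.integral_const_mul]
  apply setIntegral_congr_fun (isClosed_sphere.measurableSet)
  intro y hy
  have hy1 : ‖y‖ = 1 := by simpa using hy
  have hnorm : ‖e - (1 / ξ) • y‖ = ξ⁻¹ * ‖e - ξ • y‖ := by
    have : e - (1 / ξ) • y = ξ⁻¹ • (ξ • e - y) := by
      rw [smul_sub, smul_smul, inv_mul_cancel₀ hξ.ne', one_smul, one_div]
    rw [this, norm_smul, norm_sub_smul_symm e y he hy1 ξ, Real.norm_eq_abs, abs_inv,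
      abs_of_pos hξ]
  dsimp only
  rw [hnorm, Real.mul_rpow (by positivity) (norm_nonneg _),
    Real.inv_rpow hξ.le, ← Real.rpow_neg hξ.le, neg_neg]
end
end

section
/- Let 1 < p < 2, let δ ∈ [0,1) and let θ ∈ [0,1) satisfy θ^p ≤ δ. Then (1−δ)^{p−1}(δ−θ^p) ≤ (1−θ)^p. -/
open Real

/-
The left side is `a ^ (p - 1) * b` with `a = 1 - δ`, `b = δ - θ ^ p`. Weighted AM-GM with weights
`(p - 1)/p` and `1/p` bounds it by the `p`-th power of `((p - 1) a + b) / p`, and since `p < 2`,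
`δ < 1` and Bernoulli's inequality `1 - θ ^ p ≤ p (1 - θ)` this mean is at most `1 - θ`.
-/

theorem Real.rpow_sub_one_mul_le_weighted_mean_rpow {p a b : ℝ} (hp : 1 ≤ p) (ha : 0 ≤ a)
    (hb : 0 ≤ b) : a ^ (p - 1) * b ≤ (((p - 1) * a + b) / p) ^ p := by
  have hp0 : 0 < p := by linarith
  have amgm : a ^ ((p - 1) / p) * b ^ (1 / p) ≤ (p - 1) / p * a + 1 / p * b :=
    geom_mean_le_arith_mean2_weighted (div_nonneg (by linarith) hp0.le) (by positivity) ha hb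
      (by field_simp; ring)
  calc a ^ (p - 1) * b = (a ^ ((p - 1) / p) * b ^ (1 / p)) ^ p := by
        rw [mul_rpow (by positivity) (by positivity), ← rpow_mul ha, ← rpow_mul hb,
          div_mul_cancel₀ _ hp0.ne', one_div_mul_cancel hp0.ne', rpow_one]
    _ ≤ ((p - 1) / p * a + 1 / p * b) ^ p := rpow_le_rpow (by positivity) amgm hp0.le
    _ = (((p - 1) * a + b) / p) ^ p := by ring_nf

theorem Real.one_sub_rpow_le_mul_one_sub {p θ : ℝ} (hp : 1 ≤ p) (hθ : 0 ≤ θ) :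
    1 - θ ^ p ≤ p * (1 - θ) := by
  have bernoulli := one_add_mul_self_le_rpow_one_add (s := θ - 1) (by linarith) hp
  simp only [add_sub_cancel] at bernoulli
  linarith

theorem elementary_inequality_delta_theta_general (p δ θ : ℝ) (hp1 : 1 < p) (hp2 : p < 2)
    (hδ1 : δ < 1) (hθ0 : 0 ≤ θ) (h : θ ^ p ≤ δ) :
    (1 - δ) ^ (p - 1) * (δ - θ ^ p) ≤ (1 - θ) ^ p := by
  have hp0 : 0 < p := by linarith
  have bernoulli := one_sub_rpow_le_mul_one_sub hp1.le hθ0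
  have mean_nonneg : 0 ≤ ((p - 1) * (1 - δ) + (δ - θ ^ p)) / p :=
    div_nonneg (by nlinarith) hp0.le
  have mean_le : ((p - 1) * (1 - δ) + (δ - θ ^ p)) / p ≤ 1 - θ := by
    rw [div_le_iff₀ hp0]
    nlinarith
  calc (1 - δ) ^ (p - 1) * (δ - θ ^ p)
      ≤ (((p - 1) * (1 - δ) + (δ - θ ^ p)) / p) ^ p :=
        rpow_sub_one_mul_le_weighted_mean_rpow hp1.le (by linarith) (by linarith)
    _ ≤ (1 - θ) ^ p := rpow_le_rpow mean_nonneg mean_le hp0.le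

/-- **Key elementary inequality** from the proof of the algebraic lemma: for `1 < p < 2`,
`δ ∈ [0,1)` and `θ ∈ [0,1)` with `θ^p ≤ δ`, one has `(1-δ)^{p-1}(δ-θ^p) ≤ (1-θ)^p`. -/
theorem elementary_inequality_delta_theta (p δ θ : ℝ) (hp1 : 1 < p) (hp2 : p < 2)
    (hδ0 : 0 ≤ δ) (hδ1 : δ < 1) (hθ0 : 0 ≤ θ) (hθ1 : θ < 1) (h : θ ^ p ≤ δ) :
    (1 - δ) ^ (p - 1) * (δ - θ ^ p) ≤ (1 - θ) ^ p :=
  elementary_inequality_delta_theta_general p δ θ hp1 hp2 hδ1 hθ0 h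
end
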